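/- Fix reals L, A, ρ, C_in, C_out > 0, a real γ ∈ (0,1) and a real R > 0. Assume 3·√A < √(12·√(2·L·A·(1−γ))·R) and ρ < (√(12·√(2·L·A·(1−γ))·R) − 3·√A)². For an integer k ≥ 1 and a vector l = (l_1,…,l_k) with every l_i ∈ [1,∞), call the pair (k,l) feasible if (2L/(k+1)²)·(R + 3·Σ_{i=1}^k i·√(2A·(1−γ)^{l_i}/L))² ≤ ρ. For each integer k ≥ 1 with D(k) > 0, let n(k) be the unique integer in {1,…,k} with (n(k)−1)·(2k+2−n(k))·√(1−γ) ≤ 2·D(k) < n(k)·(2k+1−n(k))·√(1−γ), and define the vector l*(k) by l*(k)_i = 1 for 1 ≤ i ≤ n(k)−1 and l*(k)_i = ln( i·(k+1−n(k)) / (D(k) − n(k)(n(k)−1)·√(1−γ)/2) ) / ln(1/√(1−γ)) for n(k) ≤ i ≤ k. Let k* ≥ 1 be an integer attaining the minimum of ψ(k) = k·C_out + C_in·Σ_{i=1}^k l*(k)_i over all integers k ≥ 1 with D(k) > 0. Then (k*, l*(k*)) is feasible and for every feasible pair (k, l) one has C_in·Σ_{i=1}^{k*} l*(k*)_i + k*·C_out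 ≤ C_in·Σ_{i=1}^{k} l_i + k·C_out. -/

import Mathlib

/-!
With `s = √(1 - γ)` the error bound is equivalent to the linear constraint
`∑ i * s ^ l i ≤ D k`, so for fixed `k` the problem is to minimise `∑ l i` under a convex
constraint. The vector `l*(k)` satisfies the KKT conditions of this problem with multiplier
`1 / (c * -log s)`, where `c` is the common value of `i * s ^ l*(k)_i` for `i ≥ n(k)`; the tangent
line inequality for the convex function `x ↦ s ^ x` turns these conditions into optimality of
`l*(k)` (weak duality). Minimality of `ψ` at `k*` then compares different `k`.
-/

open Real Finset

theorem rpow_sub_rpow_le_mul_neg_log {s : ℝ} (hs : 0 < s) (m l : ℝ) :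
    s ^ m - s ^ l ≤ (l - m) * s ^ m * -log s := by
  have htangent : 1 + log s * (l - m) ≤ s ^ (l - m) := by
    rw [rpow_def_of_pos hs]
    linarith [add_one_le_exp (log s * (l - m))]
  have hsplit : s ^ l = s ^ m * s ^ (l - m) := by
    rw [← rpow_add hs, add_sub_cancel]
  nlinarith [rpow_pos_of_pos hs m]

theorem add_mul_rpow_le_add_mul_rpow {s a m l : ℝ} (hs : 0 < s) (ha : 0 ≤ a)
    (hkkt : 0 ≤ (l - m) * (1 - a * s ^ m * -log s)) :
    m + a * s ^ m ≤ l + a * s ^ l := by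
  nlinarith [mul_le_mul_of_nonneg_left (rpow_sub_rpow_le_mul_neg_log hs m l) ha]

theorem Finset.sum_le_sum_of_add_mul_le {ι : Type*} {S : Finset ι} {m l g h : ι → ℝ} {μ : ℝ}
    (hμ : 0 ≤ μ) (hpoint : ∀ i ∈ S, m i + μ * g i ≤ l i + μ * h i)
    (hcon : ∑ i ∈ S, h i ≤ ∑ i ∈ S, g i) :
    ∑ i ∈ S, m i ≤ ∑ i ∈ S, l i := by
  have hsum := sum_le_sum hpoint
  simp only [sum_add_distrib, ← mul_sum] at hsum
  nlinarith [mul_le_mul_of_nonneg_left hcon hμ]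

theorem sum_le_sum_of_waterFilling {S : Finset ℕ} {s c : ℝ} {n : ℕ} {m l : ℕ → ℝ}
    (hs0 : 0 < s) (hs1 : s < 1) (hc : 0 < c) (hnc : ((n : ℝ) - 1) * s ≤ c)
    (hm1 : ∀ i ∈ S, i < n → m i = 1) (hm2 : ∀ i ∈ S, n ≤ i → i * s ^ m i = c)
    (hl : ∀ i ∈ S, 1 ≤ l i) (hcon : ∑ i ∈ S, i * s ^ l i ≤ ∑ i ∈ S, i * s ^ m i) :
    ∑ i ∈ S, m i ≤ ∑ i ∈ S, l i := by
  have ht : 0 < -log s := neg_pos.2 (log_neg hs0 hs1)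
  refine sum_le_sum_of_add_mul_le (μ := 1 / (c * -log s)) (by positivity)
    (fun i hi => ?_) hcon
  simp only [← mul_assoc]
  refine add_mul_rpow_le_add_mul_rpow hs0 (by positivity) ?_
  rcases lt_or_ge i n with hin | hni
  · have hic : (i : ℝ) * s ≤ c := by
      have : (i : ℝ) + 1 ≤ n := by exact_mod_cast hin
      nlinarith
    have : 1 / (c * -log s) * i * s ^ (1 : ℝ) * -log s ≤ 1 := by
      rw [rpow_one, div_mul_eq_mul_div, div_mul_eq_mul_div, div_mul_eq_mul_div,
        div_le_one (by positivity)]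
      nlinarith
    rw [hm1 i hi hin]
    nlinarith [hl i hi]
  · have hbinding : 1 / (c * -log s) * i * s ^ m i * -log s = 1 := by
      rw [mul_assoc _ (i : ℝ), hm2 i hi hni]
      field_simp
      exact div_self (log_neg hs0 hs1).ne
    rw [hbinding, sub_self, mul_zero]

-- `l*(k)_i = log (i / waterLevel) / log (1 / s)` for `i ≥ n(k)`.
noncomputable def waterLevel (s D : ℝ) (k n : ℕ) : ℝ :=
  (D - n * (n - 1) * s / 2) / (k + 1 - n)

section Profile

variable {s D : ℝ} {k n : ℕ} {m : ℕ → ℝ}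

theorem waterLevel_pos (hs : 0 < s) (hD : 0 < D) (hn1 : 1 ≤ n) (hnk : n ≤ k)
    (hlo : ((n : ℝ) - 1) * (2 * k + 2 - n) * s ≤ 2 * D) :
    0 < waterLevel s D k n := by
  have hnk' : (n : ℝ) + 1 ≤ k + 1 := by exact_mod_cast Nat.succ_le_succ hnk
  refine div_pos ?_ (by linarith)
  rcases hn1.eq_or_lt with rfl | hn2
  · simpa using hD
  · have : (2 : ℝ) ≤ n := by exact_mod_cast hn2
    have hgap : (0 : ℝ) < (n - 1) * s * (k + 1 - n) :=
      mul_pos (mul_pos (by linarith) hs) (by linarith)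
    nlinarith

theorem sub_one_mul_le_waterLevel (hnk : n ≤ k)
    (hlo : ((n : ℝ) - 1) * (2 * k + 2 - n) * s ≤ 2 * D) :
    ((n : ℝ) - 1) * s ≤ waterLevel s D k n := by
  have : (n : ℝ) < k + 1 := by exact_mod_cast Nat.lt_succ_of_le hnk
  rw [waterLevel, le_div_iff₀ (by linarith)]
  linarith

theorem waterLevel_lt_mul (hnk : n ≤ k)
    (hhi : 2 * D < n * (2 * k + 1 - n) * s) :
    waterLevel s D k n < n * s := by
  have : (n : ℝ) < k + 1 := by exact_mod_cast Nat.lt_succ_of_le hnk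
  rw [waterLevel, div_lt_iff₀ (by linarith)]
  linarith

variable (hs0 : 0 < s) (hs1 : s < 1) (hD : 0 < D) (hn1 : 1 ≤ n) (hnk : n ≤ k)
  (hlo : ((n : ℝ) - 1) * (2 * k + 2 - n) * s ≤ 2 * D)
  (hm2 : ∀ i, n ≤ i → i ≤ k →
    m i = log (i * (k + 1 - n) / (D - n * (n - 1) * s / 2)) / log (1 / s))
include hs0 hs1 hD hn1 hnk hlo hm2

theorem mul_rpow_profile {i : ℕ} (hni : n ≤ i) (hik : i ≤ k) :
    i * s ^ m i = waterLevel s D k n := by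
  have hc := waterLevel_pos hs0 hD hn1 hnk hlo
  have hi : (0 : ℝ) < i := by exact_mod_cast hn1.trans hni
  have hlogs : log s ≠ 0 := (log_neg hs0 hs1).ne
  have hratio : i * (k + 1 - n) / (D - n * (n - 1) * s / 2) = i / waterLevel s D k n := by
    rw [waterLevel, div_div_eq_mul_div]
  have hexponent : ∀ x, log s * (x / log (1 / s)) = -x := fun x => by
    rw [one_div, log_inv]
    field_simp
  rw [hm2 i hni hik, hratio, rpow_def_of_pos hs0, hexponent, exp_neg, exp_log (by positivity)]
  field_simp

theorem sum_mul_rpow_profile (hm1 : ∀ i, 1 ≤ i → i < n → m i = 1) :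
    ∑ i ∈ Icc 1 k, i * s ^ m i = D := by
  have hgauss : ∑ i ∈ Ico 1 n, (i : ℝ) = n * (n - 1) / 2 := by
    have h := congrArg (Nat.cast (R := ℝ)) (sum_range_id_mul_two n)
    rw [sum_range_eq_add_Ico _ hn1] at h
    push_cast [hn1] at h
    linarith
  have hlow : ∑ i ∈ Ico 1 n, i * s ^ m i = n * (n - 1) / 2 * s := by
    rw [← hgauss, sum_mul]
    refine sum_congr rfl fun i hi => ?_
    rw [mem_Ico] at hi
    rw [hm1 i hi.1 hi.2, rpow_one]
  have hhigh : ∑ i ∈ Ico n (k + 1), i * s ^ m i = (k + 1 - n) * waterLevel s D k n := by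
    rw [sum_congr rfl fun i hi => mul_rpow_profile hs0 hs1 hD hn1 hnk hlo hm2
      (mem_Ico.1 hi).1 (Nat.lt_succ_iff.1 (mem_Ico.1 hi).2)]
    rw [sum_const, Nat.card_Ico, nsmul_eq_mul, Nat.cast_sub (by omega)]
    push_cast
    ring
  have hkn : (k : ℝ) + 1 - n ≠ 0 := by
    have : (n : ℝ) < k + 1 := by exact_mod_cast Nat.lt_succ_of_le hnk
    linarith
  rw [← Ico_add_one_right_eq_Icc, ← sum_Ico_consecutive _ hn1 (by omega), hlow,
    hhigh, waterLevel, mul_div_cancel₀ _ hkn]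
  ring

theorem one_le_profile (hm1 : ∀ i, 1 ≤ i → i < n → m i = 1)
    (hhi : 2 * D < n * (2 * k + 1 - n) * s) :
    ∀ i ∈ Icc 1 k, 1 ≤ m i := by
  intro i hi
  rw [mem_Icc] at hi
  rcases lt_or_ge i n with hin | hni
  · exact (hm1 i hi.1 hin).ge
  · rw [← rpow_le_rpow_left_iff_of_base_lt_one hs0 hs1, rpow_one]
    have hi0 : (0 : ℝ) < i := by exact_mod_cast hi.1
    have hni' : (n : ℝ) ≤ i := by exact_mod_cast hni
    have hlevel := mul_rpow_profile hs0 hs1 hD hn1 hnk hlo hm2 hni hi.2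
    have hlt := waterLevel_lt_mul hnk hhi
    nlinarith

theorem sum_profile_le (hm1 : ∀ i, 1 ≤ i → i < n → m i = 1) {l : ℕ → ℝ}
    (hl : ∀ i ∈ Icc 1 k, 1 ≤ l i) (hcon : ∑ i ∈ Icc 1 k, i * s ^ l i ≤ D) :
    ∑ i ∈ Icc 1 k, m i ≤ ∑ i ∈ Icc 1 k, l i :=
  sum_le_sum_of_waterFilling hs0 hs1 (waterLevel_pos hs0 hD hn1 hnk hlo)
    (sub_one_mul_le_waterLevel hnk hlo) (fun i hi hin => hm1 i (mem_Icc.1 hi).1 hin)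
    (fun i hi hni => mul_rpow_profile hs0 hs1 hD hn1 hnk hlo hm2 hni (mem_Icc.1 hi).2) hl
    (by rwa [sum_mul_rpow_profile hs0 hs1 hD hn1 hnk hlo hm2 hm1])

end Profile

theorem Real.sqrt_rpow {b : ℝ} (hb : 0 ≤ b) (x : ℝ) : √(b ^ x) = √b ^ x := by
  rw [sqrt_eq_rpow, sqrt_eq_rpow, ← rpow_mul hb, mul_comm, rpow_mul hb]

theorem Real.sqrt_mul_rpow_div {a b : ℝ} (ha : 0 ≤ a) (hb : 0 ≤ b) (L x : ℝ) :
    √(a * b ^ x / L) = √a / √L * √b ^ x := by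
  rw [mul_div_right_comm, sqrt_mul' _ (rpow_nonneg hb x), sqrt_div ha, sqrt_rpow hb]

theorem div_sq_mul_sq_le_iff {a N P ρ : ℝ} (ha : 0 < a) (hN : 0 < N) (hP : 0 ≤ P) (hρ : 0 ≤ ρ) :
    a / N ^ 2 * P ^ 2 ≤ ρ ↔ P ≤ √(ρ / a) * N := by
  rw [← sqrt_sq hN.le, ← sqrt_mul (div_nonneg hρ ha.le), le_sqrt hP (by positivity), sqrt_sq hN.le,
    div_mul_eq_mul_div, div_le_iff₀ (by positivity), div_mul_eq_mul_div, le_div_iff₀ ha]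
  constructor <;> intro h <;> linarith

theorem constraint_iff_sum_le {L A ρ γ R N : ℝ} (hL : 0 < L) (hA : 0 < A) (hρ : 0 ≤ ρ)
    (hγ : γ ≤ 1) (hR : 0 ≤ R) (hN : 0 < N) (S : Finset ℕ) (l : ℕ → ℝ) :
    2 * L / N ^ 2 * (R + 3 * ∑ i ∈ S, (i : ℝ) * √(2 * A * (1 - γ) ^ l i / L)) ^ 2 ≤ ρ ↔
      ∑ i ∈ S, (i : ℝ) * √(1 - γ) ^ l i ≤ √L / (3 * √(2 * A)) * (√(ρ / (2 * L)) * N - R) := by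
  have hb : 0 < √(2 * A) / √L := by positivity
  have hsum : ∑ i ∈ S, (i : ℝ) * √(2 * A * (1 - γ) ^ l i / L) =
      √(2 * A) / √L * ∑ i ∈ S, (i : ℝ) * √(1 - γ) ^ l i := by
    rw [mul_sum]
    refine sum_congr rfl fun i _ => ?_
    rw [sqrt_mul_rpow_div (by positivity) (by linarith)]
    ring
  have hT : 0 ≤ ∑ i ∈ S, (i : ℝ) * √(1 - γ) ^ l i := by positivity
  rw [hsum, div_sq_mul_sq_le_iff (by positivity) hN (by positivity) hρ,
    show √L / (3 * √(2 * A)) = 1 / (3 * (√(2 * A) / √L)) by field_simp, one_div_mul_eq_div,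
    le_div_iff₀ (by positivity)]
  constructor <;> intro h <;> linarith

theorem stmt_3_general (L A ρ Cin Cout γ R : ℝ)
    (hL : 0 < L) (hA : 0 < A) (hρ : 0 < ρ) (hCin : 0 < Cin)
    (hγ0 : 0 < γ) (hγ1 : γ < 1) (hR : 0 < R)
    (D : ℕ → ℝ)
    (hD : ∀ k : ℕ, D k = Real.sqrt L / (3 * Real.sqrt (2 * A)) *
      (Real.sqrt (ρ / (2 * L)) * (k + 1) - R))
    (feasible : ℕ → (ℕ → ℝ) → Prop)
    (hfeas : ∀ (k : ℕ) (l : ℕ → ℝ), feasible k l ↔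
      1 ≤ k ∧ (∀ i ∈ Finset.Icc 1 k, (1 : ℝ) ≤ l i) ∧
        2 * L / (k + 1) ^ 2 *
          (R + 3 * ∑ i ∈ Finset.Icc 1 k,
            (i : ℝ) * Real.sqrt (2 * A * (1 - γ) ^ (l i) / L)) ^ 2 ≤ ρ)
    (n : ℕ → ℕ)
    (hn : ∀ k : ℕ, 1 ≤ k → 0 < D k →
      1 ≤ n k ∧ n k ≤ k ∧
        ((n k : ℝ) - 1) * (2 * (k : ℝ) + 2 - n k) * Real.sqrt (1 - γ) ≤ 2 * D k ∧
        2 * D k < (n k : ℝ) * (2 * (k : ℝ) + 1 - n k) * Real.sqrt (1 - γ))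
    (lstar : ℕ → ℕ → ℝ)
    (hlstar1 : ∀ k i : ℕ, 1 ≤ i → i < n k → lstar k i = 1)
    (hlstar2 : ∀ k i : ℕ, n k ≤ i → i ≤ k → lstar k i =
      Real.log ((i : ℝ) * ((k : ℝ) + 1 - n k) /
          (D k - (n k : ℝ) * ((n k : ℝ) - 1) * Real.sqrt (1 - γ) / 2)) /
        Real.log (1 / Real.sqrt (1 - γ)))
    (ψ : ℕ → ℝ)
    (hψ : ∀ k : ℕ, ψ k = k * Cout + Cin * ∑ i ∈ Finset.Icc 1 k, lstar k i)
    (kstar : ℕ) (hk1 : 1 ≤ kstar) (hDpos : 0 < D kstar)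
    (hmin : ∀ k : ℕ, 1 ≤ k → 0 < D k → ψ kstar ≤ ψ k) :
    feasible kstar (lstar kstar) ∧
      ∀ (k : ℕ) (l : ℕ → ℝ), feasible k l →
        Cin * (∑ i ∈ Finset.Icc 1 kstar, lstar kstar i) + kstar * Cout ≤
          Cin * (∑ i ∈ Finset.Icc 1 k, l i) + k * Cout := by
  have hs0 : 0 < √(1 - γ) := sqrt_pos.2 (by linarith)
  have hs1 : √(1 - γ) < 1 := (sqrt_lt' one_pos).2 (by linarith)
  have hfeas' : ∀ k l, feasible k l ↔
      1 ≤ k ∧ (∀ i ∈ Icc 1 k, 1 ≤ l i) ∧ ∑ i ∈ Icc 1 k, i * √(1 - γ) ^ l i ≤ D k := by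
    intro k l
    rw [hfeas, hD, constraint_iff_sum_le hL hA hρ.le hγ1.le hR.le (by positivity)]
  obtain ⟨hn1, hnk, hlo, hhi⟩ := hn kstar hk1 hDpos
  refine ⟨(hfeas' _ _).2 ⟨hk1, ?_, ?_⟩, fun k l hkl => ?_⟩
  · exact one_le_profile hs0 hs1 hDpos hn1 hnk hlo (hlstar2 kstar) (hlstar1 kstar) hhi
  · exact (sum_mul_rpow_profile hs0 hs1 hDpos hn1 hnk hlo (hlstar2 kstar) (hlstar1 kstar)).le
  obtain ⟨hk, hl, hcon⟩ := (hfeas' k l).1 hkl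
  have hDk : 0 < D k := by
    refine lt_of_lt_of_le (sum_pos' (fun i _ => by positivity) ⟨1, ?_, ?_⟩) hcon
    · exact mem_Icc.2 ⟨le_rfl, hk⟩
    · simpa using rpow_pos_of_pos hs0 (l 1)
  obtain ⟨hn1', hnk', hlo', -⟩ := hn k hk hDk
  have hsum := sum_profile_le hs0 hs1 hDk hn1' hnk' hlo' (hlstar2 k) (hlstar1 k) hl hcon
  have hψk := hmin k hk hDk
  rw [hψ, hψ] at hψk
  nlinarith [mul_le_mul_of_nonneg_left hsum hCin.le]

/-- Proposition 5 (accelerated outer scheme, linear inner rate): the computationally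
optimal strategy uses inner iteration numbers equal to 1 up to index `n(k)-1` and then
increasing with the index. -/
theorem stmt_3 (L A ρ Cin Cout γ R : ℝ)
    (hL : 0 < L) (hA : 0 < A) (hρ : 0 < ρ) (hCin : 0 < Cin) (hCout : 0 < Cout)
    (hγ0 : 0 < γ) (hγ1 : γ < 1) (hR : 0 < R)
    (hsq : 3 * Real.sqrt A < Real.sqrt (12 * Real.sqrt (2 * L * A * (1 - γ)) * R))
    (hthresh : ρ <
      (Real.sqrt (12 * Real.sqrt (2 * L * A * (1 - γ)) * R) - 3 * Real.sqrt A) ^ 2)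
    (D : ℕ → ℝ)
    (hD : ∀ k : ℕ, D k = Real.sqrt L / (3 * Real.sqrt (2 * A)) *
      (Real.sqrt (ρ / (2 * L)) * (k + 1) - R))
    (feasible : ℕ → (ℕ → ℝ) → Prop)
    (hfeas : ∀ (k : ℕ) (l : ℕ → ℝ), feasible k l ↔
      1 ≤ k ∧ (∀ i ∈ Finset.Icc 1 k, (1 : ℝ) ≤ l i) ∧
        2 * L / (k + 1) ^ 2 *
          (R + 3 * ∑ i ∈ Finset.Icc 1 k,
            (i : ℝ) * Real.sqrt (2 * A * (1 - γ) ^ (l i) / L)) ^ 2 ≤ ρ)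
    (n : ℕ → ℕ)
    (hn : ∀ k : ℕ, 1 ≤ k → 0 < D k →
      1 ≤ n k ∧ n k ≤ k ∧
        ((n k : ℝ) - 1) * (2 * (k : ℝ) + 2 - n k) * Real.sqrt (1 - γ) ≤ 2 * D k ∧
        2 * D k < (n k : ℝ) * (2 * (k : ℝ) + 1 - n k) * Real.sqrt (1 - γ))
    (lstar : ℕ → ℕ → ℝ)
    (hlstar1 : ∀ k i : ℕ, 1 ≤ i → i < n k → lstar k i = 1)
    (hlstar2 : ∀ k i : ℕ, n k ≤ i → i ≤ k → lstar k i =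
      Real.log ((i : ℝ) * ((k : ℝ) + 1 - n k) /
          (D k - (n k : ℝ) * ((n k : ℝ) - 1) * Real.sqrt (1 - γ) / 2)) /
        Real.log (1 / Real.sqrt (1 - γ)))
    (ψ : ℕ → ℝ)
    (hψ : ∀ k : ℕ, ψ k = k * Cout + Cin * ∑ i ∈ Finset.Icc 1 k, lstar k i)
    (kstar : ℕ) (hk1 : 1 ≤ kstar) (hDpos : 0 < D kstar)
    (hmin : ∀ k : ℕ, 1 ≤ k → 0 < D k → ψ kstar ≤ ψ k) :
    feasible kstar (lstar kstar) ∧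
      ∀ (k : ℕ) (l : ℕ → ℝ), feasible k l →
        Cin * (∑ i ∈ Finset.Icc 1 kstar, lstar kstar i) + kstar * Cout ≤
          Cin * (∑ i ∈ Finset.Icc 1 k, l i) + k * Cout :=
  stmt_3_general L A ρ Cin Cout γ R hL hA hρ hCin hγ0 hγ1 hR D hD feasible hfeas n hn lstar hlstar1
    hlstar2 ψ hψ kstar hk1 hDpos hmin
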